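/- The Dolev-Yao natural deduction system and the cut-free Dolev-Yao sequent calculus derive the same sequents: Γ ⊢ M is derivable in natural deduction if and only if Γ ⊢ M is derivable in the cut-free sequent calculus. -/
import Mathlib


/-- Ground Dolev-Yao messages: names, pairing and symmetric encryption. -/
inductive Msg : Type
  | name : ℕ → Msg
  | pair : Msg → Msg → Msg
  | enc  : Msg → Msg → Msg
  deriving DecidableEq

open Msg

/-- The cut-free Dolev-Yao sequent calculus (rules id, p_L, p_R, e_L, e_R). -/
inductive SC : Set Msg → Msg → Prop
  | id {Γ M} : M ∈ Γ → SC Γ M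
  | pR {Γ M N} : SC Γ M → SC Γ N → SC Γ (pair M N)
  | eR {Γ M K} : SC Γ M → SC Γ K → SC Γ (enc M K)
  | pL {Γ M N T} : pair M N ∈ Γ →
      SC (insert M (insert N Γ)) T → SC Γ T
  | eL {Γ M K T} : enc M K ∈ Γ → SC Γ K →
      SC (insert M (insert K Γ)) T → SC Γ T

/-- The Dolev-Yao natural deduction system. -/
inductive ND : Set Msg → Msg → Prop
  | id  {Γ M} : M ∈ Γ → ND Γ M
  | pE1 {Γ M N} : ND Γ (pair M N) → ND Γ M
  | pE2 {Γ M N} : ND Γ (pair M N) → ND Γ N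
  | pI  {Γ M N} : ND Γ M → ND Γ N → ND Γ (pair M N)
  | eE  {Γ M K} : ND Γ (enc M K) → ND Γ K → ND Γ M
  | eI  {Γ M K} : ND Γ M → ND Γ K → ND Γ (enc M K)

lemma SC.weak {Γ Δ : Set Msg} {T : Msg} (h : SC Γ T) (hs : Γ ⊆ Δ) : SC Δ T := by
  induction h generalizing Δ with
  | id hM => exact SC.id (hs hM)
  | pR _ _ ih1 ih2 => exact SC.pR (ih1 hs) (ih2 hs)
  | eR _ _ ih1 ih2 => exact SC.eR (ih1 hs) (ih2 hs)
  | pL hm _ ih =>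
      exact SC.pL (hs hm) (ih (Set.insert_subset_insert (Set.insert_subset_insert hs)))
  | eL hm _ _ ihk ih =>
      exact SC.eL (hs hm) (ihk hs)
        (ih (Set.insert_subset_insert (Set.insert_subset_insert hs)))

lemma SC.pairInv {Γ : Set Msg} {P : Msg} (h : SC Γ P) :
    ∀ M N, P = pair M N → SC Γ M ∧ SC Γ N := by
  induction h with
  | id hM =>
      rintro M N rfl
      constructor
      · exact SC.pL hM (SC.id (Set.mem_insert _ _))
      · exact SC.pL hM (SC.id (Set.mem_insert_of_mem _ (Set.mem_insert _ _)))
  | pR h1 h2 _ _ => rintro M N ⟨rfl, rfl⟩; exact ⟨h1, h2⟩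
  | eR _ _ _ _ => rintro M N h; cases h
  | pL hm _ ih =>
      rintro M N rfl
      exact ⟨SC.pL hm (ih M N rfl).1, SC.pL hm (ih M N rfl).2⟩
  | eL hm hk _ _ ih =>
      rintro M N rfl
      exact ⟨SC.eL hm hk (ih M N rfl).1, SC.eL hm hk (ih M N rfl).2⟩

lemma SC.encInv {Γ : Set Msg} {P : Msg} (h : SC Γ P) :
    ∀ M K, P = enc M K → SC Γ K → SC Γ M := by
  induction h with
  | id hM =>
      rintro M K rfl hk
      exact SC.eL hM hk (SC.id (Set.mem_insert _ _))
  | pR _ _ _ _ => rintro M K h; cases h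
  | eR h1 h2 _ _ => rintro M K ⟨rfl, rfl⟩ _; exact h1
  | pL hm _ ih =>
      rintro M K rfl hk
      exact SC.pL hm (ih M K rfl (hk.weak (fun x hx =>
        Set.mem_insert_of_mem _ (Set.mem_insert_of_mem _ hx))))
  | eL hm hk' _ _ ih =>
      rintro M K rfl hk
      exact SC.eL hm hk' (ih M K rfl (hk.weak (fun x hx =>
        Set.mem_insert_of_mem _ (Set.mem_insert_of_mem _ hx))))

lemma ND.cut {Γ : Set Msg} {A T : Msg} (h : ND (insert A Γ) T) (ha : ND Γ A) :
    ND Γ T := by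
  induction h with
  | id hM =>
      rcases hM with rfl | hM
      · exact ha
      · exact ND.id hM
  | pE1 _ ih => exact ND.pE1 ih
  | pE2 _ ih => exact ND.pE2 ih
  | pI _ _ ih1 ih2 => exact ND.pI ih1 ih2
  | eE _ _ ih1 ih2 => exact ND.eE ih1 ih2
  | eI _ _ ih1 ih2 => exact ND.eI ih1 ih2

/-- Natural deduction and the cut-free sequent calculus derive the same sequents. -/
theorem nd_iff_seq (Γ : Set Msg) (M : Msg) : ND Γ M ↔ SC Γ M := by
  constructor
  · intro h
    induction h with
    | id hM => exact SC.id hM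
    | pE1 _ ih => exact (ih.pairInv _ _ rfl).1
    | pE2 _ ih => exact (ih.pairInv _ _ rfl).2
    | pI _ _ ih1 ih2 => exact SC.pR ih1 ih2
    | eE _ _ ih1 ih2 => exact ih1.encInv _ _ rfl ih2
    | eI _ _ ih1 ih2 => exact SC.eR ih1 ih2
  · intro h
    induction h with
    | id hM => exact ND.id hM
    | pR _ _ ih1 ih2 => exact ND.pI ih1 ih2
    | eR _ _ ih1 ih2 => exact ND.eI ih1 ih2
    | pL hm _ ih =>
        exact (ih.cut (ND.pE1 (ND.id (Set.mem_insert_of_mem _ hm)))).cut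
          (ND.pE2 (ND.id hm))
    | eL hm _ _ ihk ih =>
        exact (ih.cut (ND.eE (ND.id (Set.mem_insert_of_mem _ hm))
          (ND.id (Set.mem_insert _ _)))).cut ihk
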